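/- arXiv:2512.13400 — 4 statements merged into one kernel-verified Lean document; each statement's English description precedes it below -/
import Mathlib

section
/- Let f_C : ℝ → ℝ be a nonnegative integrable density with ∫|u| f_C(u) du < ∞, and suppose f_C is continuous and strictly positive on a neighborhood of τ₀. Then the function S(τ) = ∫_{−∞}^{τ} (τ₀ − u) f_C(u) du attains its maximum over ℝ uniquely at τ = τ₀. -/
open MeasureTheory Set

/-- if f_C is a nonnegative integrable density with finite first moment,
continuous and strictly positive on a neighborhood of τ₀, then
S(τ) = ∫_{−∞}^{τ} (τ₀ − u) f_C(u) du attains its maximum uniquely at τ₀. -/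
theorem stmt2 (f : ℝ → ℝ) (hf_meas : Measurable f) (hf_nonneg : ∀ u, 0 ≤ f u)
    (hf_int : Integrable f) (hf_dens : ∫ u, f u = 1)
    (hf_mom : Integrable (fun u => u * f u))
    (τ₀ : ℝ)
    (hpos : ∃ ε > 0, (∀ u ∈ Ioo (τ₀ - ε) (τ₀ + ε), 0 < f u) ∧
      ContinuousOn f (Ioo (τ₀ - ε) (τ₀ + ε))) :
    ∀ τ : ℝ, τ ≠ τ₀ →
      (∫ u in Iic τ, (τ₀ - u) * f u) < ∫ u in Iic τ₀, (τ₀ - u) * f u := by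
  obtain ⟨ε, hε, hfpos, _⟩ := hpos
  set g : ℝ → ℝ := fun u => (τ₀ - u) * f u with hg
  have hg_int : Integrable g := by
    have : g = fun u => τ₀ * f u - u * f u := by
      funext u; simp [hg, sub_mul]
    rw [this]
    exact (hf_int.const_mul τ₀).sub hf_mom
  have hsplit : ∀ a b : ℝ, a ≤ b →
      ∫ u in Iic b, g u = (∫ u in Iic a, g u) + ∫ u in Ioc a b, g u := by
    intro a b hab
    rw [← setIntegral_union (Set.Iic_disjoint_Ioc le_rfl) measurableSet_Ioc
      hg_int.integrableOn hg_int.integrableOn, Set.Iic_union_Ioc_eq_Iic hab]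
  have key : ∀ (h : ℝ → ℝ) (a b : ℝ), IntegrableOn h (Ioc a b) →
      (∀ u ∈ Ioc a b, 0 ≤ h u) →
      (∃ c d : ℝ, c < d ∧ Ioo c d ⊆ Ioc a b ∧ ∀ u ∈ Ioo c d, h u ≠ 0) →
      0 < ∫ u in Ioc a b, h u := by
    rintro h a b hint hnn ⟨c, d, hcd, hsub, hne⟩
    rw [setIntegral_pos_iff_support_of_nonneg_ae]
    · refine lt_of_lt_of_le ?_ (measure_mono (show Ioo c d ⊆ Function.support h ∩ Ioc a b from
        fun u hu => ⟨hne u hu, hsub hu⟩))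
      rw [Real.volume_Ioo]
      simpa using hcd
    · filter_upwards [ae_restrict_mem measurableSet_Ioc] with u hu using hnn u hu
    · exact hint
  intro τ hτ
  rcases lt_or_gt_of_ne hτ with h | h
  · rw [hsplit τ τ₀ h.le]
    have : 0 < ∫ u in Ioc τ τ₀, g u := by
      refine key g τ τ₀ hg_int.integrableOn
        (fun u hu => mul_nonneg (by linarith [hu.2]) (hf_nonneg u)) ?_
      refine ⟨max τ (τ₀ - ε), τ₀, by simp [h, hε],
        fun u hu => ⟨lt_of_le_of_lt (le_max_left _ _) hu.1, hu.2.le⟩, fun u hu => ?_⟩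
      have hf : 0 < f u := hfpos u ⟨lt_of_le_of_lt (le_max_right _ _) hu.1, by linarith [hu.2]⟩
      have : 0 < τ₀ - u := by linarith [hu.2]
      positivity
    linarith
  · rw [hsplit τ₀ τ h.le]
    have : 0 < ∫ u in Ioc τ₀ τ, (-g) u := by
      refine key (-g) τ₀ τ hg_int.neg.integrableOn
        (fun u hu => by
          have := mul_nonneg (show (0:ℝ) ≤ u - τ₀ by linarith [hu.1]) (hf_nonneg u)
          simp only [Pi.neg_apply, hg]
          nlinarith) ?_
      refine ⟨τ₀, min τ (τ₀ + ε), by simp [h, hε],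
        fun u hu => ⟨hu.1, le_of_lt (lt_of_lt_of_le hu.2 (min_le_left _ _))⟩, fun u hu => ?_⟩
      have hf : 0 < f u := hfpos u ⟨by linarith [hu.1], lt_of_lt_of_le hu.2 (min_le_right _ _)⟩
      have h1 : τ₀ - u < 0 := by linarith [hu.1]
      simp only [Pi.neg_apply, hg]
      nlinarith
    simp only [Pi.neg_apply, integral_neg] at this
    linarith
end

section
/- Let C follow the logistic distribution with location c and scale σ > 0, with cdf F(u) = G((u−c)/σ) where G(x) = 1/(1+e^{−x}). Then for any y, τ ∈ ℝ: ∫_{−∞}^{τ} (y − u) dF(u) = (y − τ)·G((τ−c)/σ) + σ·log(1 + exp((τ−c)/σ)). -/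
open MeasureTheory Set

/-- Standard logistic cdf. -/
noncomputable def stdLogisticCdf (u : ℝ) : ℝ := (1 + Real.exp (-u))⁻¹

/-- Standard logistic pdf, g = G(1 − G). -/
noncomputable def stdLogisticPdf (u : ℝ) : ℝ := stdLogisticCdf u * (1 - stdLogisticCdf u)

open Filter Real Topology

namespace Stmt8Aux

lemma cdf_pos (x : ℝ) : 0 < stdLogisticCdf x := by
  unfold stdLogisticCdf; positivity

lemma cdf_le_one (x : ℝ) : stdLogisticCdf x ≤ 1 := by
  unfold stdLogisticCdf
  rw [inv_le_one_iff₀]; right; linarith [Real.exp_pos (-x)]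

lemma cdf_le_exp (x : ℝ) : stdLogisticCdf x ≤ Real.exp x := by
  unfold stdLogisticCdf
  rw [inv_le_iff_one_le_mul₀ (by positivity)]
  have : Real.exp x * Real.exp (-x) = 1 := by rw [← Real.exp_add]; simp
  nlinarith [Real.exp_pos x]

lemma pdf_nonneg (x : ℝ) : 0 ≤ stdLogisticPdf x := by
  unfold stdLogisticPdf
  have := cdf_pos x; have := cdf_le_one x; nlinarith

lemma pdf_le_exp (x : ℝ) : stdLogisticPdf x ≤ Real.exp x := by
  unfold stdLogisticPdf
  have h1 := cdf_pos x; have h2 := cdf_le_one x; have h3 := cdf_le_exp x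
  nlinarith

lemma hasDerivAt_cdf (x : ℝ) : HasDerivAt stdLogisticCdf (stdLogisticPdf x) x := by
  have hpos : (0:ℝ) < 1 + Real.exp (-x) := by positivity
  have h1 : HasDerivAt (fun x : ℝ => 1 + Real.exp (-x)) (-Real.exp (-x)) x := by
    simpa using ((hasDerivAt_neg x).exp.const_add 1)
  have h2 := h1.inv hpos.ne'
  refine HasDerivAt.congr_deriv (f := stdLogisticCdf) h2 ?_
  unfold stdLogisticPdf stdLogisticCdf
  field_simp
  ring

lemma continuous_cdf : Continuous stdLogisticCdf := by
  apply Continuous.inv₀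
  · exact continuous_const.add (Real.continuous_exp.comp continuous_neg)
  · intro x; positivity

lemma continuous_pdf : Continuous stdLogisticPdf :=
  continuous_cdf.mul (continuous_const.sub continuous_cdf)

lemma hasDerivAt_H (c σ y : ℝ) (hσ : 0 < σ) (u : ℝ) :
    HasDerivAt (fun u => (y - u) * stdLogisticCdf ((u - c) / σ) +
        σ * Real.log (1 + Real.exp ((u - c) / σ)))
      ((y - u) * (stdLogisticPdf ((u - c) / σ) / σ)) u := by
  have hin : HasDerivAt (fun u : ℝ => (u - c) / σ) (1 / σ) u := by
    simpa using ((hasDerivAt_id u).sub_const c).div_const σ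
  have hG : HasDerivAt (fun u : ℝ => stdLogisticCdf ((u - c) / σ))
      (stdLogisticPdf ((u - c) / σ) * (1 / σ)) u :=
    HasDerivAt.comp (h₂ := stdLogisticCdf) u (hasDerivAt_cdf ((u - c) / σ)) hin
  have h1 : HasDerivAt (fun u : ℝ => (y - u) * stdLogisticCdf ((u - c) / σ))
      ((-1) * stdLogisticCdf ((u - c) / σ) +
        (y - u) * (stdLogisticPdf ((u - c) / σ) * (1 / σ))) u := by
    exact (((hasDerivAt_id u).const_sub y)).mul hG
  have hexp : HasDerivAt (fun u : ℝ => Real.exp ((u - c) / σ))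
      (Real.exp ((u - c) / σ) * (1 / σ)) u := hin.exp
  have hpos : (0:ℝ) < 1 + Real.exp ((u - c) / σ) := by positivity
  have h2 : HasDerivAt (fun u : ℝ => σ * Real.log (1 + Real.exp ((u - c) / σ)))
      (σ * ((Real.exp ((u - c) / σ) * (1 / σ)) / (1 + Real.exp ((u - c) / σ)))) u := by
    exact ((hexp.const_add 1).log hpos.ne').const_mul σ
  have := h1.add h2
  refine this.congr_deriv ?_
  have hid : stdLogisticCdf ((u - c) / σ) =
      Real.exp ((u - c) / σ) / (1 + Real.exp ((u - c) / σ)) := by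
    unfold stdLogisticCdf
    rw [Real.exp_neg]
    field_simp
    ring
  rw [hid]
  unfold stdLogisticPdf stdLogisticCdf
  rw [Real.exp_neg]
  have hexpos := Real.exp_pos ((u - c) / σ)
  field_simp
  ring

lemma key_tendsto (σ y : ℝ) (hσ : 0 < σ) :
    Tendsto (fun u : ℝ => (|y| + |u|) * Real.exp (u / (2*σ))) atBot (𝓝 0) := by
  have h2σ : (0:ℝ) < 2*σ := by linarith
  have hcomp : Tendsto (fun u : ℝ => -u / (2*σ)) atBot atTop :=
    (tendsto_neg_atBot_atTop).atTop_div_const h2σ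
  have hA : Tendsto (fun u : ℝ => (-u/(2*σ)) * Real.exp (-(-u/(2*σ)))) atBot (𝓝 0) := by
    have h := (tendsto_pow_mul_exp_neg_atTop_nhds_zero 1).comp hcomp
    simpa [Function.comp_def] using h
  have hB : Tendsto (fun u : ℝ => -u * Real.exp (u/(2*σ))) atBot (𝓝 0) := by
    have h := hA.const_mul (2*σ)
    rw [mul_zero] at h
    apply h.congr
    intro u
    rw [neg_div, neg_neg]
    field_simp
  have hdiv : Tendsto (fun u : ℝ => u / (2*σ)) atBot atBot :=
    tendsto_id.atBot_div_const h2σ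
  have hC : Tendsto (fun u : ℝ => |y| * Real.exp (u/(2*σ))) atBot (𝓝 0) := by
    have h := (tendsto_exp_atBot.comp hdiv).const_mul |y|
    simpa using h
  have := hC.add hB
  rw [add_zero] at this
  apply this.congr'
  filter_upwards [Iic_mem_atBot 0] with u hu
  rw [abs_of_nonpos (mem_Iic.mp hu)]
  ring

lemma exp_split (c σ : ℝ) (hσ : 0 < σ) (u : ℝ) : Real.exp ((u - c)/σ) =
    Real.exp (-c/σ) * (Real.exp (u/(2*σ)) * Real.exp (u/(2*σ))) := by
  rw [← Real.exp_add, ← Real.exp_add]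
  congr 1
  field_simp
  ring

lemma tendsto_H (c σ y : ℝ) (hσ : 0 < σ) :
    Tendsto (fun u => (y - u) * stdLogisticCdf ((u - c) / σ) +
      σ * Real.log (1 + Real.exp ((u - c) / σ))) atBot (𝓝 0) := by
  have hdiv : Tendsto (fun u : ℝ => (u - c) / σ) atBot atBot :=
    (tendsto_atBot_add_const_right _ (-c) tendsto_id).atBot_div_const hσ
  have hexp0 : Tendsto (fun u : ℝ => Real.exp ((u - c)/σ)) atBot (𝓝 0) :=
    tendsto_exp_atBot.comp hdiv
  have hlog : Tendsto (fun u : ℝ => σ * Real.log (1 + Real.exp ((u - c)/σ))) atBot (𝓝 0) := by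
    have h1 : Tendsto (fun u : ℝ => 1 + Real.exp ((u - c)/σ)) atBot (𝓝 1) := by
      simpa using (tendsto_const_nhds.add hexp0)
    have h2 := (h1.log one_ne_zero).const_mul σ
    simpa using h2
  have hterm1 : Tendsto (fun u : ℝ => (y - u) * stdLogisticCdf ((u - c) / σ)) atBot (𝓝 0) := by
    have hbd := (key_tendsto σ y hσ).const_mul (Real.exp (-c/σ))
    rw [mul_zero] at hbd
    apply squeeze_zero' ?_ ?_ hbd
    · filter_upwards [Iic_mem_atBot y] with u hu
      have := cdf_pos ((u - c)/σ)
      have : (0:ℝ) ≤ y - u := by simp at hu; linarith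
      positivity
    · filter_upwards [Iic_mem_atBot (min y 0)] with u hu
      simp only [le_min_iff, mem_Iic] at hu
      have h1 : y - u ≤ |y| + |u| := by
        cases abs_cases y with
        | inl h => cases abs_cases u with
          | inl h' => nlinarith [hu.2, h.1, h'.1]
          | inr h' => nlinarith
        | inr h => cases abs_cases u with
          | inl h' => nlinarith [hu.2]
          | inr h' => nlinarith
      have h2 : stdLogisticCdf ((u - c)/σ) ≤ Real.exp ((u - c)/σ) := cdf_le_exp _
      have h3 := exp_split c σ hσ u
      have h4 : Real.exp (u/(2*σ)) ≤ 1 := by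
        apply Real.exp_le_one_iff.mpr
        exact div_nonpos_of_nonpos_of_nonneg hu.2 (by linarith)
      have h5 := (cdf_pos ((u - c)/σ)).le
      have h6 := Real.exp_pos (u/(2*σ))
      have h7 := Real.exp_pos (-c/σ)
      have h8 : (0:ℝ) ≤ y - u := by linarith [hu.1]
      have ha : (0:ℝ) ≤ |y| + |u| := by positivity
      calc (y - u) * stdLogisticCdf ((u - c) / σ)
          ≤ (|y| + |u|) * stdLogisticCdf ((u - c) / σ) :=
            mul_le_mul_of_nonneg_right h1 h5
        _ ≤ (|y| + |u|) * Real.exp ((u - c)/σ) := mul_le_mul_of_nonneg_left h2 ha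
        _ = (Real.exp (-c/σ) * ((|y| + |u|) * Real.exp (u/(2*σ)))) * Real.exp (u/(2*σ)) := by
            rw [h3]; ring
        _ ≤ (Real.exp (-c/σ) * ((|y| + |u|) * Real.exp (u/(2*σ)))) * 1 := by
            apply mul_le_mul_of_nonneg_left h4; positivity
        _ = Real.exp (-c/σ) * ((|y| + |u|) * Real.exp (u/(2*σ))) := mul_one _
  have := hterm1.add hlog
  simpa using this

lemma exp_integrableOn_Iic (σ : ℝ) (hσ : 0 < σ) :
    IntegrableOn (fun u : ℝ => Real.exp (u / (2*σ))) (Iic (0:ℝ)) := by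
  have h2σ : (0:ℝ) < 2*σ := by linarith
  have hf : Integrable ((Iic (0:ℝ)).indicator Real.exp) := by
    rw [integrable_indicator_iff measurableSet_Iic]
    exact integrableOn_exp_Iic 0
  have h := (integrable_comp_mul_left_iff ((Iic (0:ℝ)).indicator Real.exp)
      (R := (2*σ)⁻¹) (by positivity)).2 hf
  have heq : (fun u : ℝ => (Iic (0:ℝ)).indicator Real.exp ((2*σ)⁻¹ * u)) =
      (Iic (0:ℝ)).indicator (fun u : ℝ => Real.exp (u / (2*σ))) := by
    funext u
    by_cases hu : u ≤ 0
    · have h1 : (2*σ)⁻¹ * u ∈ Iic (0:ℝ) :=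
        mul_nonpos_of_nonneg_of_nonpos (by positivity) hu
      rw [Set.indicator_of_mem h1, Set.indicator_of_mem (mem_Iic.mpr hu),
        div_eq_inv_mul]
    · push_neg at hu
      have h1 : (2*σ)⁻¹ * u ∉ Iic (0:ℝ) := by
        simp only [mem_Iic, not_le]
        exact mul_pos (by positivity) hu
      rw [Set.indicator_of_notMem h1,
        Set.indicator_of_notMem (by simpa using hu : u ∉ Iic (0:ℝ))]
  rw [heq] at h
  rwa [integrable_indicator_iff measurableSet_Iic] at h

lemma integrableOn_phi (c σ y τ : ℝ) (hσ : 0 < σ) :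
    IntegrableOn (fun u : ℝ => (y - u) * (stdLogisticPdf ((u - c) / σ) / σ)) (Iic τ) := by
  set φ : ℝ → ℝ := fun u => (y - u) * (stdLogisticPdf ((u - c) / σ) / σ) with hφ
  have hφc : Continuous φ := by
    apply (continuous_const.sub continuous_id).mul
    exact (continuous_pdf.comp (((continuous_id.sub continuous_const)).div_const σ)).div_const σ
  have hO : φ =O[atBot] (fun u : ℝ => Real.exp (u / (2*σ))) := by
    rw [Asymptotics.isBigO_iff]
    refine ⟨Real.exp (-c/σ) / σ, ?_⟩
    filter_upwards [(key_tendsto σ y hσ).eventually_lt_const one_pos] with u hu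
    have h1 : |y - u| ≤ |y| + |u| := (abs_sub y u)
    have h2 := pdf_le_exp ((u - c)/σ)
    have h3 := pdf_nonneg ((u - c)/σ)
    have h4 := exp_split c σ hσ u
    have h6 := Real.exp_pos (u/(2*σ))
    have h7 := Real.exp_pos (-c/σ)
    rw [norm_mul, norm_div, Real.norm_eq_abs, Real.norm_eq_abs, Real.norm_eq_abs,
      Real.norm_eq_abs, abs_of_nonneg h3, abs_of_pos hσ, abs_of_pos (Real.exp_pos _)]
    calc |y - u| * (stdLogisticPdf ((u - c)/σ) / σ)
        ≤ (|y| + |u|) * (Real.exp ((u - c)/σ) / σ) := by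
          apply mul_le_mul h1 _ (by positivity) (by positivity)
          gcongr
      _ = (Real.exp (-c/σ) / σ) * (((|y| + |u|) * Real.exp (u/(2*σ))) * Real.exp (u/(2*σ))) := by
          rw [h4]; field_simp
      _ ≤ (Real.exp (-c/σ) / σ) * (1 * Real.exp (u/(2*σ))) := by
          apply mul_le_mul_of_nonneg_left _ (by positivity)
          exact mul_le_mul_of_nonneg_right hu.le h6.le
      _ = Real.exp (-c/σ) / σ * Real.exp (u/(2*σ)) := by ring
  have hloc : LocallyIntegrableOn φ (Iic τ) :=
    hφc.locallyIntegrable.locallyIntegrableOn _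
  exact hloc.integrableOn_of_isBigO_atBot hO
    ⟨Iic 0, Iic_mem_atBot 0, exp_integrableOn_Iic σ hσ⟩

end Stmt8Aux

/-- for C logistic with location c and scale σ > 0 (density
f(u) = g((u−c)/σ)/σ), for any y, τ:
∫_{−∞}^{τ} (y − u) f(u) du = (y − τ)G((τ−c)/σ) + σ log(1 + exp((τ−c)/σ)). -/
theorem stmt8 (c σ y τ : ℝ) (hσ : 0 < σ) :
    (∫ u in Iic τ, (y - u) * (stdLogisticPdf ((u - c) / σ) / σ)) =
      (y - τ) * stdLogisticCdf ((τ - c) / σ) +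
        σ * Real.log (1 + Real.exp ((τ - c) / σ)) := by
  have h := MeasureTheory.integral_Iic_of_hasDerivAt_of_tendsto'
    (a := τ) (m := 0)
    (f := fun u => (y - u) * stdLogisticCdf ((u - c) / σ) +
      σ * Real.log (1 + Real.exp ((u - c) / σ)))
    (f' := fun u => (y - u) * (stdLogisticPdf ((u - c) / σ) / σ))
    (fun u _ => Stmt8Aux.hasDerivAt_H c σ y hσ u)
    (Stmt8Aux.integrableOn_phi c σ y τ hσ)
    (Stmt8Aux.tendsto_H c σ y hσ)
  rw [h, sub_zero]
end

section
/- Under the setup of the transformed outcome (unconfoundedness, overlap, integrability), for any measurable policy π : 𝕏 → {0,1} and cost c ∈ ℝ: E[π(X)·(Y* − c)] = E[π(X)·(τ₀(X) − c)], where τ₀(X) = E[Y(1) − Y(0) | X]. -/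
open MeasureTheory ProbabilityTheory

section Aux

lemma condexpB_bdd {Ω : Type*} {m' : MeasurableSpace Ω} {mΩ : MeasurableSpace Ω}
    {μ : Measure Ω} {B : Set Ω} :
    ∀ᵐ ω ∂μ, |(μ⟦B | m'⟧) ω| ≤ (1 : ℝ) := by
  have h : ∀ᵐ ω ∂μ, |B.indicator (fun _ => (1:ℝ)) ω| ≤ ((1 : NNReal) : ℝ) := by
    refine ae_of_all _ fun ω => ?_
    classical
    by_cases hω : ω ∈ B <;> simp [Set.indicator_apply, hω]
  simpa using ae_bdd_condExp_of_ae_bdd (m := m') h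

lemma condexp_mul_condexpB_int {Ω : Type*} {m' : MeasurableSpace Ω} {mΩ : MeasurableSpace Ω}
    {μ : Measure Ω} (hm' : m' ≤ mΩ) {B : Set Ω} {ψ : Ω → ℝ} :
    Integrable (fun ω => (μ[ψ | m']) ω * (μ⟦B | m'⟧) ω) μ := by
  have h := (integrable_condExp (μ := μ) (m := m') (f := ψ)).bdd_mul
    (c := 1) (f := μ⟦B | m'⟧) (stronglyMeasurable_condExp.mono hm').aestronglyMeasurable
    (by simpa [Real.norm_eq_abs] using condexpB_bdd (μ := μ) (m' := m') (B := B))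
  exact h.congr (ae_of_all _ fun ω => mul_comm _ _)

lemma aux_setIntegral_eq {Ω : Type*} {m' mF : MeasurableSpace Ω} {mΩ : MeasurableSpace Ω}
    {μ : Measure Ω} [IsFiniteMeasure μ]
    (hm' : m' ≤ mΩ) (hmF : mF ≤ mΩ)
    {B : Set Ω} (hB : MeasurableSet B)
    (h : ∀ s : Set Ω, MeasurableSet[mF] s →
      (μ⟦s ∩ B | m'⟧) =ᵐ[μ] fun ω => (μ⟦s | m'⟧) ω * (μ⟦B | m'⟧) ω)
    {A : Set Ω} (hA : MeasurableSet[m'] A)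
    {φ : Ω → ℝ} (hφm : StronglyMeasurable[mF] φ) (hφi : Integrable φ μ) :
    ∫ ω in A, (μ[φ | m']) ω * (μ⟦B | m'⟧) ω ∂μ = ∫ ω in A, B.indicator φ ω ∂μ := by
  haveI : SigmaFinite (μ.trim hm') := by
    have : IsFiniteMeasure (μ.trim hm') := isFiniteMeasure_trim hm'
    infer_instance
  have key : ∀ ⦃ψ : Ω → ℝ⦄, Integrable ψ (μ.trim hmF) →
      ∫ ω in A, (μ[ψ | m']) ω * (μ⟦B | m'⟧) ω ∂μ = ∫ ω in A, B.indicator ψ ω ∂μ := by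
    refine @Integrable.induction Ω ℝ mF _ (μ.trim hmF)
      (fun ψ => ∫ ω in A, (μ[ψ | m']) ω * (μ⟦B | m'⟧) ω ∂μ
        = ∫ ω in A, B.indicator ψ ω ∂μ) ?_ ?_ ?_ ?_
    · -- indicators
      intro c s hs _
      have hsm : MeasurableSet[mΩ] s := hmF s hs
      have hsmul : s.indicator (fun _ => c) = c • s.indicator (fun _ => (1:ℝ)) := by
        ext ω; classical
        by_cases hω : ω ∈ s <;> simp [Set.indicator_apply, hω]
      have h12 : (fun ω => (μ[s.indicator (fun _ => c) | m']) ω * (μ⟦B | m'⟧) ω)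
          =ᵐ[μ] fun ω => c * (μ⟦s ∩ B | m'⟧) ω := by
        filter_upwards [condExp_smul (μ := μ) (m := m') c (s.indicator fun _ => (1:ℝ)),
          h s hs] with ω h1 h2
        rw [hsmul, h1]
        simp only [Pi.smul_apply, smul_eq_mul]
        rw [mul_assoc, ← h2]
      rw [integral_congr_ae (ae_restrict_of_ae h12), integral_const_mul,
        setIntegral_condExp hm' ((integrable_const (1:ℝ)).indicator (hsm.inter hB)) hA]
      have hr : ∀ ω, B.indicator (s.indicator fun _ => c) ω
          = c * (s ∩ B).indicator (fun _ => (1:ℝ)) ω := by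
        intro ω; classical
        rw [Set.indicator_indicator, Set.inter_comm]
        by_cases hω : ω ∈ s ∩ B <;> simp [Set.indicator_apply, hω]
      rw [show (fun ω => B.indicator (s.indicator fun _ => c) ω)
          = fun ω => c * (s ∩ B).indicator (fun _ => (1:ℝ)) ω from funext hr]
      rw [integral_const_mul]
    · -- additivity
      intro f g _ hfi hgi hPf hPg
      have hfμ : Integrable f μ := integrable_of_integrable_trim hmF hfi
      have hgμ : Integrable g μ := integrable_of_integrable_trim hmF hgi
      have hadd : (fun ω => (μ[f + g | m']) ω * (μ⟦B | m'⟧) ω) =ᵐ[μ]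
          fun ω => (μ[f | m']) ω * (μ⟦B | m'⟧) ω + (μ[g | m']) ω * (μ⟦B | m'⟧) ω := by
        filter_upwards [condExp_add hfμ hgμ (m := m')] with ω hω
        rw [hω, Pi.add_apply, add_mul]
      rw [integral_congr_ae (ae_restrict_of_ae hadd),
        integral_add (condexp_mul_condexpB_int hm').integrableOn
          (condexp_mul_condexpB_int hm').integrableOn, hPf, hPg]
      have hind : (fun ω => B.indicator (f + g) ω)
          = fun ω => B.indicator f ω + B.indicator g ω := by
        ext ω; classical
        by_cases hω : ω ∈ B <;> simp [Set.indicator_apply, hω]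
      rw [hind, integral_add (hfμ.indicator hB).integrableOn (hgμ.indicator hB).integrableOn]
    · -- closedness
      have hdist : ∀ f g : Lp ℝ 1 (μ.trim hmF),
          ∫ ω, |(f : Ω → ℝ) ω - (g : Ω → ℝ) ω| ∂μ = dist f g := by
        intro f g
        rw [L1.dist_eq_integral_dist,
          ← integral_trim_ae hmF ((Lp.aestronglyMeasurable f).dist (Lp.aestronglyMeasurable g))]
        exact integral_congr_ae (ae_of_all _ fun ω => by simp [Real.dist_eq])
      have hFlip : LipschitzWith 1 (fun f : Lp ℝ 1 (μ.trim hmF) =>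
          ∫ ω in A, (μ[(f : Ω → ℝ) | m']) ω * (μ⟦B | m'⟧) ω ∂μ) := by
        refine LipschitzWith.of_dist_le_mul fun f g => ?_
        have hfμ : Integrable (f : Ω → ℝ) μ :=
          integrable_of_integrable_trim hmF (L1.integrable_coeFn f)
        have hgμ : Integrable (g : Ω → ℝ) μ :=
          integrable_of_integrable_trim hmF (L1.integrable_coeFn g)
        rw [Real.dist_eq, ← integral_sub (condexp_mul_condexpB_int hm').integrableOn
          (condexp_mul_condexpB_int hm').integrableOn]
        have habs : ∀ᵐ ω ∂μ, |(μ[(f : Ω → ℝ) | m']) ω * (μ⟦B | m'⟧) ω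
            - (μ[(g : Ω → ℝ) | m']) ω * (μ⟦B | m'⟧) ω|
            ≤ |(μ[((f : Ω → ℝ) - (g : Ω → ℝ)) | m']) ω| := by
          filter_upwards [condexpB_bdd (μ := μ) (m' := m') (B := B),
            condExp_sub hfμ hgμ (m := m')] with ω h1 h2
          rw [h2, Pi.sub_apply, ← sub_mul, abs_mul]
          calc |(μ[(f : Ω → ℝ) | m']) ω - (μ[(g : Ω → ℝ) | m']) ω| * |(μ⟦B | m'⟧) ω|
              ≤ |(μ[(f : Ω → ℝ) | m']) ω - (μ[(g : Ω → ℝ) | m']) ω| * 1 :=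
                mul_le_mul_of_nonneg_left h1 (abs_nonneg _)
            _ = |(μ[(f : Ω → ℝ) | m']) ω - (μ[(g : Ω → ℝ) | m']) ω| := mul_one _
        calc |∫ ω in A, ((μ[(f : Ω → ℝ) | m']) ω * (μ⟦B | m'⟧) ω
                - (μ[(g : Ω → ℝ) | m']) ω * (μ⟦B | m'⟧) ω) ∂μ|
            ≤ ∫ ω in A, |(μ[(f : Ω → ℝ) | m']) ω * (μ⟦B | m'⟧) ω
                - (μ[(g : Ω → ℝ) | m']) ω * (μ⟦B | m'⟧) ω| ∂μ := by
              simpa [Real.norm_eq_abs] using norm_integral_le_integral_norm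
                (μ := μ.restrict A) (f := fun ω => (μ[(f : Ω → ℝ) | m']) ω * (μ⟦B | m'⟧) ω
                  - (μ[(g : Ω → ℝ) | m']) ω * (μ⟦B | m'⟧) ω)
          _ ≤ ∫ ω, |(μ[(f : Ω → ℝ) | m']) ω * (μ⟦B | m'⟧) ω
                - (μ[(g : Ω → ℝ) | m']) ω * (μ⟦B | m'⟧) ω| ∂μ :=
              setIntegral_le_integral
                ((condexp_mul_condexpB_int hm').sub (condexp_mul_condexpB_int hm')).abs
                (ae_of_all _ fun ω => abs_nonneg _)
          _ ≤ ∫ ω, |(μ[((f : Ω → ℝ) - (g : Ω → ℝ)) | m']) ω| ∂μ :=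
              integral_mono_ae
                ((condexp_mul_condexpB_int hm').sub (condexp_mul_condexpB_int hm')).abs
                integrable_condExp.abs habs
          _ ≤ ∫ ω, |((f : Ω → ℝ) - (g : Ω → ℝ)) ω| ∂μ := integral_abs_condExp_le _
          _ = ∫ ω, |(f : Ω → ℝ) ω - (g : Ω → ℝ) ω| ∂μ := by
              exact integral_congr_ae (ae_of_all _ fun ω => by simp)
          _ = 1 * dist f g := by rw [one_mul, hdist f g]
      have hGlip : LipschitzWith 1 (fun f : Lp ℝ 1 (μ.trim hmF) =>
          ∫ ω in A, B.indicator (f : Ω → ℝ) ω ∂μ) := by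
        refine LipschitzWith.of_dist_le_mul fun f g => ?_
        have hfμ : Integrable (f : Ω → ℝ) μ :=
          integrable_of_integrable_trim hmF (L1.integrable_coeFn f)
        have hgμ : Integrable (g : Ω → ℝ) μ :=
          integrable_of_integrable_trim hmF (L1.integrable_coeFn g)
        rw [Real.dist_eq, ← integral_sub (hfμ.indicator hB).integrableOn
          (hgμ.indicator hB).integrableOn]
        calc |∫ ω in A, (B.indicator (f : Ω → ℝ) ω - B.indicator (g : Ω → ℝ) ω) ∂μ|
            ≤ ∫ ω in A, |B.indicator (f : Ω → ℝ) ω - B.indicator (g : Ω → ℝ) ω| ∂μ := by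
              simpa [Real.norm_eq_abs] using norm_integral_le_integral_norm
                (μ := μ.restrict A)
                (f := fun ω => B.indicator (f : Ω → ℝ) ω - B.indicator (g : Ω → ℝ) ω)
          _ ≤ ∫ ω, |B.indicator (f : Ω → ℝ) ω - B.indicator (g : Ω → ℝ) ω| ∂μ :=
              setIntegral_le_integral
                ((hfμ.indicator hB).sub (hgμ.indicator hB)).abs
                (ae_of_all _ fun ω => abs_nonneg _)
          _ ≤ ∫ ω, |(f : Ω → ℝ) ω - (g : Ω → ℝ) ω| ∂μ := by
              refine integral_mono_ae ((hfμ.indicator hB).sub (hgμ.indicator hB)).abs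
                (hfμ.sub hgμ).abs (ae_of_all _ fun ω => ?_)
              classical
              by_cases hω : ω ∈ B <;>
                simp [Set.indicator_apply, hω, abs_nonneg]
          _ = 1 * dist f g := by rw [one_mul, hdist f g]
      exact isClosed_eq hFlip.continuous hGlip.continuous
    · -- ae congruence
      intro f g hfg hfi hPf
      have hfgμ : f =ᵐ[μ] g := ae_eq_of_ae_eq_trim hfg
      have h1 : (fun ω => (μ[f | m']) ω * (μ⟦B | m'⟧) ω)
          =ᵐ[μ] fun ω => (μ[g | m']) ω * (μ⟦B | m'⟧) ω := by
        filter_upwards [condExp_congr_ae (m := m') hfgμ] with ω hω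
        rw [hω]
      have h2 : (fun ω => B.indicator f ω) =ᵐ[μ] fun ω => B.indicator g ω := by
        filter_upwards [hfgμ] with ω hω
        classical
        by_cases hB' : ω ∈ B <;> simp [Set.indicator_apply, hB', hω]
      rw [← integral_congr_ae (ae_restrict_of_ae h1),
        ← integral_congr_ae (ae_restrict_of_ae h2)]
      exact hPf
  exact key (hφi.trim hmF hφm)

end Aux

lemma condexp_indicator_mul_aux {Ω : Type*} {m' mF : MeasurableSpace Ω} {mΩ : MeasurableSpace Ω}
    {μ : Measure Ω} [IsFiniteMeasure μ]
    (hm' : m' ≤ mΩ) (hmF : mF ≤ mΩ)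
    {B : Set Ω} (hB : MeasurableSet B)
    (h : ∀ s : Set Ω, MeasurableSet[mF] s →
      (μ⟦s ∩ B | m'⟧) =ᵐ[μ] fun ω => (μ⟦s | m'⟧) ω * (μ⟦B | m'⟧) ω)
    {φ : Ω → ℝ} (hφm : StronglyMeasurable[mF] φ) (hφi : Integrable φ μ) :
    μ[B.indicator φ | m'] =ᵐ[μ] fun ω => (μ[φ | m']) ω * (μ⟦B | m'⟧) ω := by
  haveI : SigmaFinite (μ.trim hm') := by
    have : IsFiniteMeasure (μ.trim hm') := isFiniteMeasure_trim hm'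
    infer_instance
  refine (ae_eq_condExp_of_forall_setIntegral_eq hm' (hφi.indicator hB)
    (fun s _ _ => (condexp_mul_condexpB_int hm').integrableOn)
    (fun s hs _ => aux_setIntegral_eq hm' hmF hB h hs hφm hφi) ?_).symm
  exact (stronglyMeasurable_condExp.mul stronglyMeasurable_condExp).aestronglyMeasurable

lemma stmt12_core {Ω : Type*} {m' mF : MeasurableSpace Ω} {mΩ : MeasurableSpace Ω}
    {μ : Measure Ω} [IsProbabilityMeasure μ]
    (hm' : m' ≤ mΩ) (hmF : mF ≤ mΩ)
    {Y1 Y0 W : Ω → ℝ}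
    (hWbin : ∀ ω, W ω = 0 ∨ W ω = 1)
    (hY1sm : StronglyMeasurable[mF] Y1) (hY0sm : StronglyMeasurable[mF] Y0)
    (hY1i : Integrable Y1 μ) (hY0i : Integrable Y0 μ)
    {eX : Ω → ℝ} (heXsm : StronglyMeasurable[m'] eX)
    (he_cond : eX =ᵐ[μ] μ[W | m'])
    (he_overlap : ∀ᵐ ω ∂μ, eX ω ∈ Set.Ioo (0:ℝ) 1)
    (hB : MeasurableSet (W ⁻¹' {1}))
    (hprod : ∀ s : Set Ω, MeasurableSet[mF] s →
      (μ⟦s ∩ (W ⁻¹' {1}) | m'⟧) =ᵐ[μ]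
        fun ω => (μ⟦s | m'⟧) ω * (μ⟦W ⁻¹' {1} | m'⟧) ω)
    {Ystar : Ω → ℝ}
    (hYstar : ∀ ω, Ystar ω = (W ω * Y1 ω + (1 - W ω) * Y0 ω) *
      (W ω / eX ω - (1 - W ω) / (1 - eX ω)))
    (hYstari : Integrable Ystar μ) :
    μ[Ystar | m'] =ᵐ[μ] fun ω => (μ[Y1 | m']) ω - (μ[Y0 | m']) ω := by
  set B : Set Ω := W ⁻¹' {1} with hBdef
  have hmemB : ∀ ω, ω ∈ B ↔ W ω = 1 := fun ω => Iff.rfl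
  have hWind : B.indicator (fun _ => (1:ℝ)) = W := by
    funext ω
    rcases hWbin ω with h0 | h1
    · have : ω ∉ B := by simp [hmemB, h0]
      simp [Set.indicator_of_notMem this, h0]
    · have : ω ∈ B := by simp [hmemB, h1]
      simp [Set.indicator_of_mem this, h1]
  have hcB : (fun ω => (μ⟦B | m'⟧) ω) =ᵐ[μ] eX := by
    have hBW : (μ⟦B | m'⟧) = μ[W | m'] := by
      exact congrArg (fun f => μ[f | m']) hWind
    rw [hBW]
    exact he_cond.symm
  -- W * Y1 and W * Y0 as indicators
  have hWY1 : (fun ω => W ω * Y1 ω) = B.indicator Y1 := by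
    funext ω
    rcases hWbin ω with h0 | h1
    · have : ω ∉ B := by simp [hmemB, h0]
      simp [Set.indicator_of_notMem this, h0]
    · have : ω ∈ B := by simp [hmemB, h1]
      simp [Set.indicator_of_mem this, h1]
  have hWY0 : (fun ω => W ω * Y0 ω) = B.indicator Y0 := by
    funext ω
    rcases hWbin ω with h0 | h1
    · have : ω ∉ B := by simp [hmemB, h0]
      simp [Set.indicator_of_notMem this, h0]
    · have : ω ∈ B := by simp [hmemB, h1]
      simp [Set.indicator_of_mem this, h1]
  have hWY1i : Integrable (fun ω => W ω * Y1 ω) μ := by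
    rw [hWY1]; exact hY1i.indicator hB
  have hWY0i : Integrable (fun ω => W ω * Y0 ω) μ := by
    rw [hWY0]; exact hY0i.indicator hB
  have cWY1 : μ[(fun ω => W ω * Y1 ω) | m'] =ᵐ[μ] fun ω => (μ[Y1 | m']) ω * eX ω := by
    rw [hWY1]
    filter_upwards [condexp_indicator_mul_aux hm' hmF hB hprod hY1sm hY1i, hcB] with ω h1 h2
    rw [h1, h2]
  have cWY0 : μ[(fun ω => W ω * Y0 ω) | m'] =ᵐ[μ] fun ω => (μ[Y0 | m']) ω * eX ω := by
    rw [hWY0]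
    filter_upwards [condexp_indicator_mul_aux hm' hmF hB hprod hY0sm hY0i, hcB] with ω h1 h2
    rw [h1, h2]
  -- the two halves of Ystar
  set f₁ : Ω → ℝ := fun ω => (eX ω)⁻¹ * (W ω * Y1 ω) with hf₁def
  set f₀ : Ω → ℝ := fun ω => (1 - eX ω)⁻¹ * ((1 - W ω) * Y0 ω) with hf₀def
  have hstar_eq : Ystar = f₁ - f₀ := by
    funext ω
    rw [Pi.sub_apply, hYstar ω, hf₁def, hf₀def]
    rcases hWbin ω with h0 | h1
    · simp only [h0]
      rw [div_eq_mul_inv, div_eq_mul_inv]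
      ring
    · simp only [h1]
      rw [div_eq_mul_inv, div_eq_mul_inv]
      ring
  have hf₁eq : f₁ = B.indicator Ystar := by
    funext ω
    rcases hWbin ω with h0 | h1
    · have hω : ω ∉ B := by simp [hmemB, h0]
      simp only [Set.indicator_of_notMem hω, hf₁def, h0]
      ring
    · have hω : ω ∈ B := by simp [hmemB, h1]
      rw [Set.indicator_of_mem hω, hYstar ω, hf₁def]
      simp only [h1]
      rw [div_eq_mul_inv, div_eq_mul_inv]
      ring
  have hf₀eq : f₀ = fun ω => -(Bᶜ.indicator Ystar ω) := by
    funext ω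
    rcases hWbin ω with h0 | h1
    · have hω : ω ∈ Bᶜ := by simp [hmemB, h0]
      rw [Set.indicator_of_mem hω, hYstar ω, hf₀def]
      simp only [h0]
      rw [div_eq_mul_inv, div_eq_mul_inv]
      ring
    · have hω : ω ∉ Bᶜ := by simp [hmemB, h1]
      simp only [Set.indicator_of_notMem hω, hf₀def, h1]
      ring
  have hf₁i : Integrable f₁ μ := by
    rw [hf₁eq]; exact hYstari.indicator hB
  have hf₀i : Integrable f₀ μ := by
    rw [hf₀eq]; exact (hYstari.indicator hB.compl).neg
  -- conditional expectation of f₁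
  have heinv_sm : StronglyMeasurable[m'] (fun ω => (eX ω)⁻¹) :=
    heXsm.measurable.inv.stronglyMeasurable
  have cf₁ : μ[f₁ | m'] =ᵐ[μ] fun ω => (μ[Y1 | m']) ω := by
    have hpull := condExp_mul_of_stronglyMeasurable_left (μ := μ) heinv_sm
      (show Integrable ((fun ω => (eX ω)⁻¹) * fun ω => W ω * Y1 ω) μ from hf₁i) hWY1i
    have harg : μ[f₁ | m'] = μ[(fun ω => (eX ω)⁻¹) * fun ω => W ω * Y1 ω | m'] := rfl
    rw [harg]
    filter_upwards [hpull, cWY1, he_overlap] with ω h1 h2 h3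
    rw [h1, Pi.mul_apply, h2]
    have hne : eX ω ≠ 0 := ne_of_gt h3.1
    field_simp
  -- conditional expectation of f₀
  have hg0 : (fun ω => (1 - W ω) * Y0 ω) = Y0 - fun ω => W ω * Y0 ω := by
    funext ω; rw [Pi.sub_apply]; ring
  have hg0i : Integrable (fun ω => (1 - W ω) * Y0 ω) μ := by
    rw [hg0]; exact hY0i.sub hWY0i
  have cg0 : μ[(fun ω => (1 - W ω) * Y0 ω) | m'] =ᵐ[μ]
      fun ω => (μ[Y0 | m']) ω * (1 - eX ω) := by
    rw [hg0]
    filter_upwards [condExp_sub hY0i hWY0i (m := m'), cWY0] with ω h1 h2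
    rw [h1, Pi.sub_apply, h2]
    ring
  have he1inv_sm : StronglyMeasurable[m'] (fun ω => (1 - eX ω)⁻¹) :=
    (stronglyMeasurable_const.sub heXsm).measurable.inv.stronglyMeasurable
  have cf₀ : μ[f₀ | m'] =ᵐ[μ] fun ω => (μ[Y0 | m']) ω := by
    have hpull := condExp_mul_of_stronglyMeasurable_left (μ := μ) he1inv_sm
      (show Integrable ((fun ω => (1 - eX ω)⁻¹) * fun ω => (1 - W ω) * Y0 ω) μ from hf₀i) hg0i
    have harg : μ[f₀ | m'] = μ[(fun ω => (1 - eX ω)⁻¹) * fun ω => (1 - W ω) * Y0 ω | m'] := rfl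
    rw [harg]
    filter_upwards [hpull, cg0, he_overlap] with ω h1 h2 h3
    rw [h1, Pi.mul_apply, h2]
    have hne : 1 - eX ω ≠ 0 := sub_ne_zero.mpr (ne_of_gt h3.2)
    field_simp
  -- conclude
  rw [hstar_eq]
  filter_upwards [condExp_sub hf₁i hf₀i (m := m'), cf₁, cf₀] with ω h1 h2 h3
  rw [h1, Pi.sub_apply, h2, h3]

/-- under unconfoundedness, overlap and integrability, for any
measurable policy π : 𝕏 → {0,1} and cost c,
E[π(X)(Y* − c)] = E[π(X)(τ₀(X) − c)], where τ₀(X) = E[Y(1) − Y(0)|X]. -/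
theorem stmt12 {Ω 𝕏 : Type*} {mΩ : MeasurableSpace Ω} [StandardBorelSpace Ω]
    {m𝕏 : MeasurableSpace 𝕏}
    (μ : Measure Ω) [IsProbabilityMeasure μ]
    (Y1 Y0 W : Ω → ℝ) (X : Ω → 𝕏)
    (hY1m : Measurable Y1) (hY0m : Measurable Y0) (hWm : Measurable W)
    (hXm : Measurable X)
    (hmX : MeasurableSpace.comap X m𝕏 ≤ mΩ)
    (hWbin : ∀ ω, W ω = 0 ∨ W ω = 1)
    (e : 𝕏 → ℝ) (hem : Measurable e)
    (he_cond : (fun ω => e (X ω)) =ᵐ[μ] μ[W | MeasurableSpace.comap X m𝕏])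
    (he_overlap : ∀ᵐ ω ∂μ, e (X ω) ∈ Set.Ioo (0 : ℝ) 1)
    (hindep : CondIndepFun (MeasurableSpace.comap X m𝕏) hmX
      (fun ω => (Y1 ω, Y0 ω)) W μ)
    (hY1i : Integrable Y1 μ) (hY0i : Integrable Y0 μ)
    (Ystar : Ω → ℝ)
    (hYstar : ∀ ω, Ystar ω =
      (W ω * Y1 ω + (1 - W ω) * Y0 ω) *
        (W ω / e (X ω) - (1 - W ω) / (1 - e (X ω))))
    (hYstari : Integrable Ystar μ)
    (τ₀ : 𝕏 → ℝ) (hτ₀m : Measurable τ₀)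
    (hτ₀ : (fun ω => τ₀ (X ω)) =ᵐ[μ]
      μ[(fun ω => Y1 ω - Y0 ω) | MeasurableSpace.comap X m𝕏])
    (π : 𝕏 → ℝ) (hπm : Measurable π) (hπbin : ∀ x, π x = 0 ∨ π x = 1)
    (c : ℝ) :
    (∫ ω, π (X ω) * (Ystar ω - c) ∂μ) =
      ∫ ω, π (X ω) * (τ₀ (X ω) - c) ∂μ := by
  haveI : SigmaFinite (μ.trim hmX) := by
    have : IsFiniteMeasure (μ.trim hmX) := isFiniteMeasure_trim hmX
    infer_instance
  have hVm : Measurable (fun ω => (Y1 ω, Y0 ω)) := hY1m.prodMk hY0m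
  have hmF : MeasurableSpace.comap (fun ω => (Y1 ω, Y0 ω)) inferInstance ≤ mΩ := hVm.comap_le
  have hVmF : Measurable[MeasurableSpace.comap (fun ω => (Y1 ω, Y0 ω)) inferInstance]
      (fun ω => (Y1 ω, Y0 ω)) := Measurable.of_comap_le le_rfl
  have hY1sm : StronglyMeasurable[MeasurableSpace.comap (fun ω => (Y1 ω, Y0 ω)) inferInstance]
      Y1 := (measurable_fst.comp hVmF).stronglyMeasurable
  have hY0sm : StronglyMeasurable[MeasurableSpace.comap (fun ω => (Y1 ω, Y0 ω)) inferInstance]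
      Y0 := (measurable_snd.comp hVmF).stronglyMeasurable
  have hXmX : Measurable[MeasurableSpace.comap X m𝕏] X := Measurable.of_comap_le le_rfl
  have heXsm : StronglyMeasurable[MeasurableSpace.comap X m𝕏] (fun ω => e (X ω)) :=
    (hem.comp hXmX).stronglyMeasurable
  have hB : MeasurableSet (W ⁻¹' {1}) := hWm (measurableSet_singleton 1)
  have hprod : ∀ s : Set Ω,
      MeasurableSet[MeasurableSpace.comap (fun ω => (Y1 ω, Y0 ω)) inferInstance] s →
      (μ⟦s ∩ (W ⁻¹' {1}) | MeasurableSpace.comap X m𝕏⟧) =ᵐ[μ]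
        fun ω => (μ⟦s | MeasurableSpace.comap X m𝕏⟧) ω *
          (μ⟦W ⁻¹' {1} | MeasurableSpace.comap X m𝕏⟧) ω := by
    intro s hs
    obtain ⟨t, ht, rfl⟩ := hs
    exact (condIndepFun_iff_condExp_inter_preimage_eq_mul hVm hWm).mp hindep t {1} ht
      (measurableSet_singleton 1)
  have hcore : μ[Ystar | MeasurableSpace.comap X m𝕏] =ᵐ[μ]
      fun ω => (μ[Y1 | MeasurableSpace.comap X m𝕏]) ω -
        (μ[Y0 | MeasurableSpace.comap X m𝕏]) ω :=
    stmt12_core hmX hmF hWbin hY1sm hY0sm hY1i hY0i heXsm he_cond he_overlap hB hprod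
      hYstar hYstari
  have hτeq : (fun ω => τ₀ (X ω)) =ᵐ[μ]
      fun ω => (μ[Y1 | MeasurableSpace.comap X m𝕏]) ω -
        (μ[Y0 | MeasurableSpace.comap X m𝕏]) ω := by
    have h1 : μ[(fun ω => Y1 ω - Y0 ω) | MeasurableSpace.comap X m𝕏]
        = μ[Y1 - Y0 | MeasurableSpace.comap X m𝕏] := rfl
    refine hτ₀.trans ?_
    rw [h1]
    filter_upwards [condExp_sub hY1i hY0i (m := MeasurableSpace.comap X m𝕏)] with ω hω
    rw [hω, Pi.sub_apply]
  have hstar_tau : μ[Ystar | MeasurableSpace.comap X m𝕏] =ᵐ[μ] fun ω => τ₀ (X ω) :=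
    hcore.trans hτeq.symm
  -- integrability facts
  have hπX_sm : StronglyMeasurable[MeasurableSpace.comap X m𝕏] (fun ω => π (X ω)) :=
    (hπm.comp hXmX).stronglyMeasurable
  have hπbdd : ∀ᵐ ω ∂μ, ‖π (X ω)‖ ≤ 1 := ae_of_all _ fun ω => by
    rcases hπbin (X ω) with h | h <;> simp [h]
  have hπXaesm : AEStronglyMeasurable (fun ω => π (X ω)) μ :=
    (hπm.comp hXm).aestronglyMeasurable
  have hπYi : Integrable (fun ω => π (X ω) * Ystar ω) μ :=
    hYstari.bdd_mul hπXaesm hπbdd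
  have hτXi : Integrable (fun ω => τ₀ (X ω)) μ := integrable_condExp.congr hτ₀.symm
  have hπτi : Integrable (fun ω => π (X ω) * τ₀ (X ω)) μ :=
    hτXi.bdd_mul hπXaesm hπbdd
  have hπci : Integrable (fun ω => π (X ω) * c) μ :=
    (integrable_const c).bdd_mul hπXaesm hπbdd
  -- key equality
  have key : ∫ ω, π (X ω) * Ystar ω ∂μ = ∫ ω, π (X ω) * τ₀ (X ω) ∂μ := by
    have hπYi' : Integrable ((fun ω => π (X ω)) * Ystar) μ := hπYi
    have hpull := condExp_mul_of_stronglyMeasurable_left (μ := μ) hπX_sm hπYi' hYstari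
    calc ∫ ω, π (X ω) * Ystar ω ∂μ
        = ∫ ω, ((fun ω => π (X ω)) * Ystar) ω ∂μ := rfl
      _ = ∫ ω, (μ[(fun ω => π (X ω)) * Ystar | MeasurableSpace.comap X m𝕏]) ω ∂μ :=
          (integral_condExp hmX (f := (fun ω => π (X ω)) * Ystar)).symm
      _ = ∫ ω, π (X ω) * τ₀ (X ω) ∂μ := by
          refine integral_congr_ae ?_
          filter_upwards [hpull, hstar_tau] with ω h1 h2
          rw [h1, Pi.mul_apply, h2]
  have hL : (fun ω => π (X ω) * (Ystar ω - c))
      = fun ω => π (X ω) * Ystar ω - π (X ω) * c := funext fun ω => mul_sub _ _ _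
  have hR : (fun ω => π (X ω) * (τ₀ (X ω) - c))
      = fun ω => π (X ω) * τ₀ (X ω) - π (X ω) * c := funext fun ω => mul_sub _ _ _
  rw [hL, hR, integral_sub hπYi hπci, integral_sub hπτi hπci, key]
end

section
/- Let f_C be a density strictly positive in a neighborhood of τ₀(x) for every x ∈ 𝕏, with finite first moment, and let τ₀ : 𝕏 → ℝ be measurable with τ₀(X) integrable. Then the functional Q̃(τ) = E_X[∫_{−∞}^{τ(X)} (τ₀(X) − u) f_C(u) du] over measurable τ : 𝕏 → ℝ is maximized at τ = τ₀, and moreover τ₀ also maximizes Q(τ) = E_X[1{τ(X) ≥ c}·(τ₀(X) − c)] for any c ∈ ℝ. -/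
open MeasureTheory Set

lemma stmt14_aux {f : ℝ → ℝ} (hf_nonneg : ∀ u, 0 ≤ f u)
    (hf_int : Integrable f) (hf_mom : Integrable (fun u => u * f u))
    (a t : ℝ) :
    (∫ u in Iic t, (a - u) * f u) ≤ ∫ u in Iic a, (a - u) * f u := by
  have hint : Integrable (fun u => (a - u) * f u) := by
    have : (fun u => (a - u) * f u) = fun u => a * f u - u * f u := by
      funext u; ring
    rw [this]
    exact (hf_int.const_mul a).sub hf_mom
  rcases le_total t a with h | h
  · have key : (∫ u in Iic a, (a - u) * f u) - ∫ u in Iic t, (a - u) * f u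
        = ∫ u in Ioc t a, (a - u) * f u := by
      rw [intervalIntegral.integral_Iic_sub_Iic hint.integrableOn hint.integrableOn,
        intervalIntegral.integral_of_le h]
    have hnn : 0 ≤ ∫ u in Ioc t a, (a - u) * f u := by
      apply setIntegral_nonneg measurableSet_Ioc
      intro u hu
      exact mul_nonneg (by linarith [hu.2]) (hf_nonneg u)
    linarith
  · have key : (∫ u in Iic t, (a - u) * f u) - ∫ u in Iic a, (a - u) * f u
        = ∫ u in Ioc a t, (a - u) * f u := by
      rw [intervalIntegral.integral_Iic_sub_Iic hint.integrableOn hint.integrableOn,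
        intervalIntegral.integral_of_le h]
    have hnp : (∫ u in Ioc a t, (a - u) * f u) ≤ 0 := by
      apply setIntegral_nonpos measurableSet_Ioc
      intro u hu
      exact mul_nonpos_of_nonpos_of_nonneg (by linarith [hu.1]) (hf_nonneg u)
    linarith

/-- Fisher consistency with covariates: if f_C is a density with
finite first moment, continuous and strictly positive in a neighborhood of τ₀(x)
for every x, and τ₀(X) is integrable, then τ₀ maximizes the surrogate functional
Q̃(τ) = E_X[∫_{−∞}^{τ(X)} (τ₀(X) − u) f_C(u) du] over measurable τ : 𝕏 → ℝ, and
τ₀ also maximizes Q(τ) = E_X[1{τ(X) ≥ c}(τ₀(X) − c)] for any c. -/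
theorem stmt14 {𝕏 : Type*} [MeasurableSpace 𝕏]
    (μ : Measure 𝕏) [IsProbabilityMeasure μ]
    (f : ℝ → ℝ) (hf_meas : Measurable f) (hf_nonneg : ∀ u, 0 ≤ f u)
    (hf_int : Integrable f) (hf_dens : ∫ u, f u = 1)
    (hf_mom : Integrable (fun u => u * f u))
    (τ₀ : 𝕏 → ℝ) (hτ₀m : Measurable τ₀) (hτ₀i : Integrable τ₀ μ)
    (hpos : ∀ x : 𝕏, ∃ ε > 0,
      (∀ u ∈ Ioo (τ₀ x - ε) (τ₀ x + ε), 0 < f u) ∧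
        ContinuousOn f (Ioo (τ₀ x - ε) (τ₀ x + ε)))
    (hτ₀surr : Integrable (fun x => ∫ u in Iic (τ₀ x), (τ₀ x - u) * f u) μ) :
    (∀ τ : 𝕏 → ℝ, Measurable τ →
        Integrable (fun x => ∫ u in Iic (τ x), (τ₀ x - u) * f u) μ →
        (∫ x, (∫ u in Iic (τ x), (τ₀ x - u) * f u) ∂μ) ≤
          ∫ x, (∫ u in Iic (τ₀ x), (τ₀ x - u) * f u) ∂μ) ∧
      (∀ c : ℝ, ∀ τ : 𝕏 → ℝ, Measurable τ →
        (∫ x, (if c ≤ τ x then (1 : ℝ) else 0) * (τ₀ x - c) ∂μ) ≤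
          ∫ x, (if c ≤ τ₀ x then (1 : ℝ) else 0) * (τ₀ x - c) ∂μ) := by
  constructor
  · intro τ hτm hτi
    exact integral_mono hτi hτ₀surr fun x =>
      stmt14_aux hf_nonneg hf_int hf_mom (τ₀ x) (τ x)
  · intro c τ hτm
    have hbase : Integrable (fun x => τ₀ x - c) μ := hτ₀i.sub (integrable_const c)
    have hint : ∀ (σ : 𝕏 → ℝ), Measurable σ →
        Integrable (fun x => (if c ≤ σ x then (1 : ℝ) else 0) * (τ₀ x - c)) μ := by
      intro σ hσm
      apply hbase.mono
      · apply AEStronglyMeasurable.mul _ (hbase.aestronglyMeasurable)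
        refine (Measurable.ite (measurableSet_le measurable_const hσm)
          measurable_const measurable_const).aestronglyMeasurable
      · filter_upwards with x
        by_cases h : c ≤ σ x <;> simp [h, abs_nonneg]
    apply integral_mono (hint τ hτm) (hint τ₀ hτ₀m)
    intro x
    by_cases h1 : c ≤ τ₀ x
    · by_cases h2 : c ≤ τ x <;> simp [h1, h2] <;> linarith
    · by_cases h2 : c ≤ τ x <;> simp [h1, h2] <;> linarith [not_le.mp h1]
end
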